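/- arXiv:2403.09047 — 2 statements merged into one kernel-verified Lean document; each statement's English description precedes it below -/
import Mathlib

section
/- There is an absolute constant c > 0 such that for every prime power q and every integer m ≥ 1, the number of α ∈ F_{q^m}^× that are not SU-regular is at most c·m²·q^{1 + m/2}. -/
open Matrix CategoryTheory

noncomputable section

/-- The orbit of a nonzero element `α` of the algebraic closure under
`α ↦ ω·α^{±q^i}` with `ω^{q+1} = 1`. -/
def suOrbit (q : ℕ) {K : Type} [Field K] (α : AlgebraicClosure K) :
    Set (AlgebraicClosure K) :=
  {x | ∃ ω : AlgebraicClosure K, ω ^ (q + 1) = 1 ∧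
    ∃ i : ℕ, x = ω * α ^ q ^ i ∨ x = ω * α⁻¹ ^ q ^ i}

/-- `α ∈ F_{q^m}^×` is `SU`-regular if its orbit has exactly `2m(q+1)` elements. -/
def IsSURegular (q m : ℕ) {K : Type} [Field K] (α : AlgebraicClosure K) : Prop :=
  (suOrbit q α).ncard = 2 * m * (q + 1)

/-!
As `α ^ q ^ m = α`, the orbit of `α` is the image of `μ_{q+1} × {0, …, m - 1} × {±1}` under
`(ω, i, e) ↦ ω α^{e q^i}`. Raising to the power `q + 1` kills `ω`, so `α` is `SU`-regular unless
two of the `2m` elements `β^{±q^i}`, `β = α^{q+1}`, coincide. Cancelling a Frobenius power, a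
coincidence gives `β^{q^k - 1} = 1` with `0 < k < m` or `β^{q^k + 1} = 1` with `k < m`. Since also
`α^{q^m - 1} = 1`, `α` is then a root of unity of order dividing
`gcd((q + 1)(q^k ∓ 1), q^m - 1) ≤ (q + 1) · gcd(q^k ∓ 1, q^m - 1)`. Finally
`gcd(q^a - 1, q^m - 1) = q^{gcd(a, m)} - 1`, where `gcd(k, m)`, resp. `gcd(2k, m)` if `2k > m`, is a
proper divisor of `m`, hence at most `m / 2`; so each of these `2m` gcds is `O(q^{1 + m/2})`.
-/

open Polynomial Finset

namespace Nat

lemma two_mul_le_of_dvd_of_ne {d m : ℕ} (hdvd : d ∣ m) (hne : d ≠ m) (hm : 0 < m) :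
    2 * d ≤ m := by
  by_contra! h
  exact hne (eq_of_dvd_of_lt_two_mul hm.ne' hdvd h).symm

lemma gcd_mul_left_le_mul_gcd {a b n : ℕ} (ha : 0 < a) (hn : 0 < n) :
    gcd (a * b) n ≤ a * gcd b n :=
  (le_of_dvd (Nat.mul_pos (gcd_pos_of_pos_left n ha) (gcd_pos_of_pos_right _ hn))
    (gcd_mul_left_dvd_mul_gcd n a b)).trans (Nat.mul_le_mul_right _ (gcd_le_left n ha))

lemma exists_gcd_pow_sub_one_pow_sub_one_le {q k m : ℕ} (hk : 0 < k) (hkm : k < m) :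
    ∃ g, 2 * g ≤ m ∧ gcd (q ^ k - 1) (q ^ m - 1) ≤ q ^ g := by
  refine ⟨gcd k m, two_mul_le_of_dvd_of_ne (gcd_dvd_right k m) ?_ (by omega), ?_⟩
  · have := gcd_le_left m hk
    omega
  · rw [pow_sub_one_gcd_pow_sub_one]
    exact sub_le _ _

lemma exists_gcd_pow_add_one_pow_sub_one_le {q k m : ℕ} (hq : 1 < q) (hkm : k < m) :
    ∃ g, 2 * g ≤ m ∧ gcd (q ^ k + 1) (q ^ m - 1) ≤ 2 * q ^ g := by
  by_cases hk : 2 * k ≤ m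
  · refine ⟨k, hk, (gcd_le_left _ (by positivity)).trans ?_⟩
    have := one_le_pow k q (by omega)
    omega
  · have hqm : 0 < q ^ m - 1 := Nat.sub_pos_of_lt (one_lt_pow (by omega) hq)
    refine ⟨gcd (2 * k) m, two_mul_le_of_dvd_of_ne (gcd_dvd_right _ _) ?_ (by omega), ?_⟩
    · intro h
      have := eq_of_dvd_of_lt_two_mul (by omega) (h ▸ gcd_dvd_left (2 * k) m) (by omega)
      omega
    · have hdvd : q ^ k + 1 ∣ q ^ (2 * k) - 1 :=
        ⟨q ^ k - 1, by rw [pow_mul', ← one_pow 2, Nat.sq_sub_sq, one_pow]⟩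
      calc gcd (q ^ k + 1) (q ^ m - 1) ≤ gcd (q ^ (2 * k) - 1) (q ^ m - 1) :=
            le_of_dvd (gcd_pos_of_pos_right _ hqm) (gcd_dvd_gcd_of_dvd_left _ hdvd)
        _ ≤ 2 * q ^ gcd (2 * k) m := by
            rw [pow_sub_one_gcd_pow_sub_one]
            omega

end Nat

lemma succ_mul_pow_le_rpow {q g m : ℕ} (hq : 1 ≤ q) (hg : 2 * g ≤ m) :
    ((q + 1) * q ^ g : ℝ) ≤ 2 * (q : ℝ) ^ (1 + (m : ℝ) / 2) := by
  have hq' : (1 : ℝ) ≤ q := by exact_mod_cast hq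
  have hpow : (q : ℝ) ^ g ≤ (q : ℝ) ^ ((m : ℝ) / 2) := by
    rw [← Real.rpow_natCast]
    refine Real.rpow_le_rpow_of_exponent_le hq' ?_
    rw [le_div_iff₀ two_pos]
    exact_mod_cast (by omega : g * 2 ≤ m)
  rw [Real.rpow_add (by positivity), Real.rpow_one]
  nlinarith [pow_nonneg (by positivity : (0 : ℝ) ≤ q) g]

lemma gcd_succ_mul_pow_sub_one_le {q k m : ℕ} (hq : 1 < q) (hk : 0 < k) (hkm : k < m) :
    (Nat.gcd ((q + 1) * (q ^ k - 1)) (q ^ m - 1) : ℝ) ≤ 2 * (q : ℝ) ^ (1 + (m : ℝ) / 2) := by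
  obtain ⟨g, hg, hle⟩ := Nat.exists_gcd_pow_sub_one_pow_sub_one_le (q := q) hk hkm
  have hqm : 0 < q ^ m - 1 := Nat.sub_pos_of_lt (Nat.one_lt_pow (by omega) hq)
  calc (Nat.gcd ((q + 1) * (q ^ k - 1)) (q ^ m - 1) : ℝ) ≤ ((q + 1) * q ^ g : ℕ) := by
        exact_mod_cast
          (Nat.gcd_mul_left_le_mul_gcd (by omega) hqm).trans (Nat.mul_le_mul_left _ hle)
    _ ≤ 2 * (q : ℝ) ^ (1 + (m : ℝ) / 2) := by push_cast; exact succ_mul_pow_le_rpow hq.le hg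

lemma gcd_succ_mul_pow_add_one_le {q k m : ℕ} (hq : 1 < q) (hkm : k < m) :
    (Nat.gcd ((q + 1) * (q ^ k + 1)) (q ^ m - 1) : ℝ) ≤ 4 * (q : ℝ) ^ (1 + (m : ℝ) / 2) := by
  obtain ⟨g, hg, hle⟩ := Nat.exists_gcd_pow_add_one_pow_sub_one_le hq hkm
  have hqm : 0 < q ^ m - 1 := Nat.sub_pos_of_lt (Nat.one_lt_pow (by omega) hq)
  calc (Nat.gcd ((q + 1) * (q ^ k + 1)) (q ^ m - 1) : ℝ) ≤ ((q + 1) * (2 * q ^ g) : ℕ) := by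
        exact_mod_cast
          (Nat.gcd_mul_left_le_mul_gcd (by omega) hqm).trans (Nat.mul_le_mul_left _ hle)
    _ ≤ 4 * (q : ℝ) ^ (1 + (m : ℝ) / 2) := by
        push_cast
        linarith [succ_mul_pow_le_rpow (m := m) hq.le hg]

lemma pow_pow_eq_pow_pow_mod {M : Type*} [Monoid M] {x : M} {q m : ℕ} (h : x ^ q ^ m = x)
    (i : ℕ) : x ^ q ^ i = x ^ q ^ (i % m) := by
  have hper : Function.IsPeriodicPt (· ^ q) m x := by
    simpa [Function.IsPeriodicPt, Function.IsFixedPt, pow_iterate] using h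
  rw [← congrFun (pow_iterate q i) x, ← hper.iterate_mod_apply, pow_iterate]

lemma ncard_setOf_pow_eq_one (F : Type*) [CommRing F] [IsDomain F] (n : ℕ) [NeZero n]
    [HasEnoughRootsOfUnity F n] : {ω : F | ω ^ n = 1}.ncard = n := by
  obtain ⟨ζ, hζ⟩ := HasEnoughRootsOfUnity.exists_primitiveRoot F n
  rw [← nthRootsFinset_toSet (NeZero.pos n), Set.ncard_coe_finset, hζ.card_nthRootsFinset]

lemma card_nthRootsFinset_le {R : Type*} [CommRing R] [IsDomain R] (n : ℕ) (a : R) :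
    (nthRootsFinset n a).card ≤ n := by
  classical
  rw [nthRootsFinset_def]
  exact (Multiset.toFinset_card_le _).trans (card_nthRoots n a)

lemma pow_card_pow_injective (K L : Type*) [Field K] [Fintype K] [Field L] [Algebra K L]
    [Algebra.IsAlgebraic K L] (n : ℕ) :
    Function.Injective fun x : L ↦ x ^ Fintype.card K ^ n := by
  rw [← FiniteField.coe_frobeniusAlgEquivOfAlgebraic_iterate]
  exact (AlgEquiv.injective _).iterate n

section SignedPow

variable {L : Type*} [Field L] {q : ℕ}

/-- `signedPow q x (i, b) = x ^ (± q ^ i)`, with `b = true` for the sign `+`. -/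
def signedPow (q : ℕ) (x : L) (y : ℕ × Bool) : L :=
  (bif y.2 then x else x⁻¹) ^ q ^ y.1

lemma signedPow_ne_zero {x : L} (hx : x ≠ 0) (y : ℕ × Bool) : signedPow q x y ≠ 0 := by
  rcases y with ⟨i, _ | _⟩ <;> simp [signedPow, hx]

lemma signedPow_pow (x : L) (y : ℕ × Bool) (n : ℕ) :
    signedPow q x y ^ n = signedPow q (x ^ n) y := by
  rcases y with ⟨i, _ | _⟩ <;> simp [signedPow, ← pow_mul, mul_comm]

lemma exists_pow_pow_eq_of_not_injOn (hinj : ∀ j, Function.Injective fun x : L ↦ x ^ q ^ j)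
    {x : L} {m : ℕ} (h : ¬ Set.InjOn (signedPow q x) (Set.Iio m ×ˢ Set.univ)) :
    (∃ k, 0 < k ∧ k < m ∧ x ^ q ^ k = x) ∨ ∃ k < m, x ^ q ^ k = x⁻¹ := by
  simp only [Set.InjOn, not_forall] at h
  obtain ⟨⟨i, b⟩, ⟨hi, -⟩, ⟨j, b'⟩, ⟨hj, -⟩, heq, hne⟩ := h
  wlog hji : j ≤ i generalizing i j b b'
  · exact this j b' hj i b hi heq.symm (Ne.symm hne) (by omega)
  obtain ⟨k, rfl⟩ := Nat.exists_eq_add_of_le hji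
  have key : (bif b then x else x⁻¹) ^ q ^ k = bif b' then x else x⁻¹ :=
    hinj j (by simpa [signedPow, ← pow_mul, ← pow_add, add_comm] using heq)
  simp only [Set.mem_Iio] at hi
  cases b <;> cases b' <;> simp only [cond_true, cond_false, inv_pow, _root_.inv_inj] at key
  · exact .inl ⟨k, Nat.pos_of_ne_zero fun h ↦ hne (by simp [h]), by omega, key⟩
  · exact .inr ⟨k, by omega, inv_eq_iff_eq_inv.mp key⟩
  · exact .inr ⟨k, by omega, key⟩
  · exact .inl ⟨k, Nat.pos_of_ne_zero fun h ↦ hne (by simp [h]), by omega, key⟩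

end SignedPow

section Orbit

variable {K : Type} [Field K] {q m : ℕ}

lemma suOrbit_eq_image {α : AlgebraicClosure K} (hm : 0 < m) (hfix : α ^ q ^ m = α) :
    suOrbit q α = (fun z : AlgebraicClosure K × ℕ × Bool ↦ z.1 * signedPow q α z.2) ''
      ({ω | ω ^ (q + 1) = 1} ×ˢ Set.Iio m ×ˢ Set.univ) := by
  have hfix' : α⁻¹ ^ q ^ m = α⁻¹ := by rw [inv_pow, hfix]
  ext x
  constructor
  · rintro ⟨ω, hω, i, rfl | rfl⟩
    · exact ⟨(ω, i % m, true), ⟨hω, Nat.mod_lt i hm, trivial⟩,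
        by simp [signedPow, ← pow_pow_eq_pow_pow_mod hfix]⟩
    · exact ⟨(ω, i % m, false), ⟨hω, Nat.mod_lt i hm, trivial⟩,
        by simp [signedPow, ← pow_pow_eq_pow_pow_mod hfix']⟩
  · rintro ⟨⟨ω, i, b⟩, ⟨hω, -, -⟩, rfl⟩
    exact ⟨ω, hω, i, by cases b <;> simp [signedPow]⟩

lemma isSURegular_of_injOn (hq : (q : K) = 0) (hm : 0 < m) {α : AlgebraicClosure K}
    (hα : α ≠ 0) (hfix : α ^ q ^ m = α)
    (hinj : Set.InjOn (signedPow q (α ^ (q + 1))) (Set.Iio m ×ˢ Set.univ)) :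
    IsSURegular q m α := by
  have : NeZero ((q + 1 : ℕ) : K) := ⟨by simp [hq]⟩
  rw [IsSURegular, suOrbit_eq_image hm hfix, Set.InjOn.ncard_image, Set.ncard_prod,
    Set.ncard_prod, ncard_setOf_pow_eq_one]
  · rw [Set.ncard_Iio_nat, Set.ncard_univ, Nat.card_eq_fintype_card, Fintype.card_bool]
    ring
  · rintro ⟨ω, y⟩ ⟨hω, hy⟩ ⟨ω', y'⟩ ⟨hω', hy'⟩ h
    replace hω : ω ^ (q + 1) = 1 := hω
    replace hω' : ω' ^ (q + 1) = 1 := hω'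
    obtain rfl : y = y' := hinj hy hy' <| by
      simpa [mul_pow, hω, hω', signedPow_pow] using congrArg (· ^ (q + 1)) h
    simpa using mul_right_cancel₀ (signedPow_ne_zero hα y) h

end Orbit

section Count

variable {K : Type} [Field K] [Fintype K] {q m : ℕ}

lemma not_isSURegular_subset [DecidableEq (AlgebraicClosure K)] (hK : Fintype.card K = q)
    (hq : 1 < q) (hm : 0 < m) :
    {α : AlgebraicClosure K | α ≠ 0 ∧ α ^ q ^ m = α ∧ ¬ IsSURegular q m α} ⊆
      ↑((Ioo 0 m).biUnion (fun k ↦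
          nthRootsFinset (Nat.gcd ((q + 1) * (q ^ k - 1)) (q ^ m - 1)) (1 : AlgebraicClosure K)) ∪
        (range m).biUnion (fun k ↦
          nthRootsFinset (Nat.gcd ((q + 1) * (q ^ k + 1)) (q ^ m - 1)) 1)) := by
  rintro α ⟨hα, hfix, hreg⟩
  have hqm : 0 < q ^ m - 1 := Nat.sub_pos_of_lt (Nat.one_lt_pow hm.ne' hq)
  have hα1 : α ^ (q ^ m - 1) = 1 := by
    rw [pow_sub₀ _ hα (Nat.one_le_pow _ _ (by omega)), pow_one, hfix, mul_inv_cancel₀ hα]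
  have hγ : α ^ (q + 1) ≠ 0 := pow_ne_zero _ hα
  have hinj : ∀ j, Function.Injective fun x : AlgebraicClosure K ↦ x ^ q ^ j :=
    hK ▸ pow_card_pow_injective K (AlgebraicClosure K)
  have hchar : (q : K) = 0 := hK ▸ FiniteField.cast_card_eq_zero K
  simp only [coe_union, coe_biUnion, Set.mem_union, Set.mem_iUnion, mem_coe,
    mem_nthRootsFinset (Nat.gcd_pos_of_pos_right _ hqm), pow_gcd_eq_one, mem_Ioo, mem_range]
  have hcollision := exists_pow_pow_eq_of_not_injOn hinj
    (fun h ↦ hreg (isSURegular_of_injOn hchar hm hα hfix h))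
  rcases hcollision with ⟨k, hk, hkm, hk'⟩ | ⟨k, hkm, hk'⟩
  · refine .inl ⟨k, ⟨hk, hkm⟩, ?_, hα1⟩
    rw [pow_mul, pow_sub₀ _ hγ (Nat.one_le_pow _ _ (by omega)), pow_one, hk', mul_inv_cancel₀ hγ]
  · refine .inr ⟨k, hkm, ?_, hα1⟩
    rw [pow_mul, pow_succ, hk', inv_mul_cancel₀ hγ]

lemma ncard_not_isSURegular_le (hK : Fintype.card K = q) (hq : 1 < q) (hm : 0 < m) :
    {α : AlgebraicClosure K | α ≠ 0 ∧ α ^ q ^ m = α ∧ ¬ IsSURegular q m α}.ncard ≤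
      ∑ k ∈ Ioo 0 m, Nat.gcd ((q + 1) * (q ^ k - 1)) (q ^ m - 1) +
        ∑ k ∈ range m, Nat.gcd ((q + 1) * (q ^ k + 1)) (q ^ m - 1) := by
  classical
  calc _ ≤ _ := Set.ncard_le_ncard (not_isSURegular_subset hK hq hm) (Finset.finite_toSet _)
    _ ≤ _ := (Set.ncard_coe_finset _).trans_le (card_union_le _ _)
    _ ≤ _ := add_le_add
      (card_biUnion_le.trans (sum_le_sum fun k _ ↦ card_nthRootsFinset_le _ _))
      (card_biUnion_le.trans (sum_le_sum fun k _ ↦ card_nthRootsFinset_le _ _))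

end Count

/-- There is an absolute constant `c > 0` such that for every prime power `q` and every
`m ≥ 1`, the number of elements of `F_{q^m}^×` that are not `SU`-regular is at most
`c · m² · q^{1 + m/2}`. -/
theorem count_non_SU_regular :
    ∃ c : ℝ, 0 < c ∧ ∀ q : ℕ, IsPrimePow q →
    ∀ (K : Type) [Field K] [Fintype K], Fintype.card K = q →
    ∀ m : ℕ, 1 ≤ m →
      (({α : AlgebraicClosure K | α ≠ 0 ∧ α ^ q ^ m = α ∧
          ¬ IsSURegular q m α}.ncard : ℝ)) ≤
        c * (m : ℝ) ^ 2 * (q : ℝ) ^ (1 + (m : ℝ) / 2) := by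
  refine ⟨8, by norm_num, fun q hq K _ _ hK m hm ↦ ?_⟩
  set Q := (q : ℝ) ^ (1 + (m : ℝ) / 2)
  have hQ : 0 ≤ Q := by positivity
  have hIoo : ((Ioo 0 m).card : ℝ) ≤ m := by
    exact_mod_cast (Nat.card_Ioo 0 m).trans_le (by omega)
  have hmQ : (m : ℝ) * Q ≤ m ^ 2 * Q := by
    gcongr
    nlinarith [(by exact_mod_cast hm : (1 : ℝ) ≤ m)]
  calc _ ≤ ((∑ k ∈ Ioo 0 m, Nat.gcd ((q + 1) * (q ^ k - 1)) (q ^ m - 1) +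
        ∑ k ∈ range m, Nat.gcd ((q + 1) * (q ^ k + 1)) (q ^ m - 1) : ℕ) : ℝ) := by
        exact_mod_cast ncard_not_isSURegular_le hK hq.one_lt hm
    _ ≤ (Ioo 0 m).card • (2 * Q) + (range m).card • (4 * Q) := by
        push_cast
        gcongr
        · exact sum_le_card_nsmul _ _ _ fun k hk ↦
            gcd_succ_mul_pow_sub_one_le hq.one_lt (mem_Ioo.1 hk).1 (mem_Ioo.1 hk).2
        · exact sum_le_card_nsmul _ _ _ fun k hk ↦
            gcd_succ_mul_pow_add_one_le hq.one_lt (mem_range.1 hk)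
    _ ≤ 8 * (m : ℝ) ^ 2 * Q := by
        rw [nsmul_eq_mul, nsmul_eq_mul, card_range]
        nlinarith [mul_le_mul_of_nonneg_right hIoo (by positivity : (0 : ℝ) ≤ 2 * Q)]
end
end

section
/- For every reduced symbol (A,B) with A ∪ B nonempty, the maximum value satisfies max(A,B) ≤ rank(A,B). -/
/-!
Let `m` be the largest entry, say `m ∈ A` (the rank is symmetric in `A` and `B`), and put
`p = |A| - 1`, `q = |B|`. The entries of `A \ {m}` are distinct, and so are those of `B`; as the
symbol is reduced, one of the two halves avoids `0`. Hence the sum `T` of these `p + q` entries is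
at least `p(p+1)/2 + q(q-1)/2` or `p(p-1)/2 + q(q+1)/2`, and then `4T + 1 - (p+q)²` is at least the
square `(p - q ± 1)²`, so `T ≥ ⌊(p+q)²/4⌋` and `rank(A,B) = m + T - ⌊(p+q)²/4⌋ ≥ m`.
-/

open Matrix CategoryTheory

noncomputable section

/-- The rank of a symbol `(A, B)`:
`Σ_{a∈A} a + Σ_{b∈B} b − ⌊(|A|+|B|−1)²/4⌋`. -/
def symRank (A B : Finset ℕ) : ℤ :=
  (∑ a ∈ A, (a : ℤ)) + (∑ b ∈ B, (b : ℤ)) -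
    Int.fdiv (((A.card : ℤ) + (B.card : ℤ) - 1) ^ 2) 4

/-- The maximum value of a symbol `(A, B)`: the largest element of `A ∪ B`. -/
def symMax (A B : Finset ℕ) : ℤ := (((A ∪ B).sup id : ℕ) : ℤ)

/-- The defect of a symbol `(A, B)`: `|A| − |B|`. -/
def symDef (A B : Finset ℕ) : ℤ := (A.card : ℤ) - (B.card : ℤ)

/-- The level of a symbol `(A, B)`: `rank − max + ⌊(|A|+|B|−1)/2⌋`. -/
def symLev (A B : Finset ℕ) : ℤ :=
  symRank A B - symMax A B + Int.fdiv ((A.card : ℤ) + (B.card : ℤ) - 1) 2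

open Finset

theorem Finset.mul_card_le_two_mul_sum_of_le (s : Finset ℕ) (c : ℕ) (h : ∀ x ∈ s, c ≤ x) :
    (#s : ℤ) * (#s - 1 + 2 * c) ≤ 2 * ∑ x ∈ s, (x : ℤ) := by
  induction s using Finset.induction_on_max with
  | empty => simp
  | insert a s hlt ih =>
    have ha : a ∉ s := fun has => (hlt a has).false
    have hsub : s ⊆ Ico c a := fun x hx => mem_Ico.2 ⟨h x (mem_insert_of_mem hx), hlt x hx⟩
    have hcard : #s + c ≤ a := by
      have := (card_le_card hsub).trans_eq (Nat.card_Ico c a)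
      have := h a (mem_insert_self a s)
      omega
    have ih := ih fun x hx => h x (mem_insert_of_mem hx)
    rw [card_insert_of_notMem ha, sum_insert ha]
    push_cast
    nlinarith

theorem Int.fdiv_le_of_lt_mul {a b c : ℤ} (hb : 0 < b) (h : a < (c + 1) * b) : a.fdiv b ≤ c := by
  rw [Int.fdiv_eq_ediv_of_nonneg _ hb.le]
  exact Int.lt_add_one_iff.1 ((Int.ediv_lt_iff_lt_mul hb).2 h)

theorem symRank_comm (A B : Finset ℕ) : symRank A B = symRank B A := by
  unfold symRank
  ring_nf

theorem le_symRank_of_mem {A B : Finset ℕ} {m : ℕ} (hm : m ∈ A) (hred : 0 ∉ A ∨ 0 ∉ B) :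
    (m : ℤ) ≤ symRank A B := by
  obtain ⟨c, d, hcd, hA, hB⟩ :
      ∃ c d : ℕ, c + d = 1 ∧ (∀ x ∈ A.erase m, c ≤ x) ∧ ∀ x ∈ B, d ≤ x := by
    rcases hred with h0 | h0
    · exact ⟨1, 0, rfl, fun x hx => Nat.pos_of_ne_zero
        (by rintro rfl; exact h0 (mem_of_mem_erase hx)), fun x _ => x.zero_le⟩
    · exact ⟨0, 1, rfl, fun x _ => x.zero_le,
        fun x hx => Nat.pos_of_ne_zero (by rintro rfl; exact h0 hx)⟩
  have hsumA := (A.erase m).mul_card_le_two_mul_sum_of_le c hA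
  have hsumB := B.mul_card_le_two_mul_sum_of_le d hB
  have hcard : (#A : ℤ) = #(A.erase m) + 1 := by exact_mod_cast (card_erase_add_one hm).symm
  have hcd : (c : ℤ) + d = 1 := by exact_mod_cast hcd
  have key : ((#A : ℤ) + #B - 1) ^ 2 <
      (∑ x ∈ A.erase m, (x : ℤ) + ∑ x ∈ B, (x : ℤ) + 1) * 4 := by
    rw [hcard]
    nlinarith [sq_nonneg ((#(A.erase m) : ℤ) - #B + 2 * c - 1)]
  rw [symRank, ← add_sum_erase A _ hm]
  linarith [Int.fdiv_le_of_lt_mul (by norm_num) key]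

/-- For every reduced symbol `(A,B)` with `A ∪ B` nonempty, `max(A,B) ≤ rank(A,B)`. -/
theorem symbol_max_le_rank (A B : Finset ℕ) (hred : 0 ∉ A ∨ 0 ∉ B)
    (hne : (A ∪ B).Nonempty) :
    symMax A B ≤ symRank A B := by
  obtain ⟨m, hm, hmax⟩ := (A ∪ B).exists_mem_eq_sup hne id
  rw [symMax, hmax, id]
  rcases mem_union.1 hm with hmA | hmB
  · exact le_symRank_of_mem hmA hred
  · exact symRank_comm A B ▸ le_symRank_of_mem hmB hred.symm
end
end
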